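/- arXiv:1809.00831 — 6 statements merged into one kernel-verified Lean document; each statement's English description precedes it below -/
import Mathlib

section
/- Let G be a group, h ∈ G, p_h : G → Z_h defined by p_h(g) = g·s(Z_h·g)⁻¹ from a section s of the right cosets. For a tuple (g_0,...,g_n) with g_0···g_n = r⁻¹ h r, define π_h(g_0,...,g_n) = (p_h(r g_0 ··· g_n)⁻¹ h p_h(r g_0), p_h(r g_0)⁻¹ p_h(r g_0 g_1), ..., p_h(r g_0 ··· g_{n-1})⁻¹ p_h(r g_0 ··· g_n)). Then all entries of π_h(g_0,...,g_n) lie in Z_h, the product of its entries is conjugate (in Z_h) to h, and the value is independent of the choice of r satisfying g_0···g_n = r⁻¹ h r. -/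
/-!
Write `m_i = p_h(r g_0 ⋯ g_i) ∈ Z_h`. Then `π_h(g_0, …, g_n) = (m_n⁻¹ h m_0, m_0⁻¹ m_1, …, m_{n-1}⁻¹ m_n)`
has its entries in `Z_h`, and its product telescopes to `m_n⁻¹ h m_n`. Replacing `r` by another
conjugator `r' = a r` with `a = r' r⁻¹ ∈ Z_h` replaces every `m_i` by `a m_i`, and `a` cancels from
every entry because it commutes with `h`.
-/

/-- `π_h` on a basis tuple `(g_0,...,g_n)` with `g_0⋯g_n = r⁻¹ h r`:
`(p_h(r g_0⋯g_n)⁻¹ h p_h(r g_0), p_h(r g_0)⁻¹ p_h(r g_0 g_1), ...,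
 p_h(r g_0⋯g_{n-1})⁻¹ p_h(r g_0⋯g_n))`. -/
def pih {G : Type*} [Group G] (h : G) (p : G → G) (r : G) (l : List G) : List G :=
  let m := ((l.scanl (· * ·) r).tail).map p
  ((m.getLastD 1)⁻¹ * h * m.headD 1) :: List.zipWith (fun a b => a⁻¹ * b) m.dropLast m.tail

namespace List

variable {α : Type*}

theorem getLastD_mem_of_forall_mem {s : Set α} {d : α} {l : List α} (hd : d ∈ s)
    (hl : ∀ x ∈ l, x ∈ s) : l.getLastD d ∈ s := by
  rw [getLastD_eq_getLast?]
  cases hlast : l.getLast? with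
  | none => exact hd
  | some x => exact hl x (mem_of_getLast? hlast)

theorem headD_mem_of_forall_mem {s : Set α} {d : α} {l : List α} (hd : d ∈ s)
    (hl : ∀ x ∈ l, x ∈ s) : l.headD d ∈ s := by
  cases l with
  | nil => exact hd
  | cons x t => exact hl x mem_cons_self

theorem exists_of_mem_zipWith {β γ : Type*} {f : α → β → γ} {s : List α} {t : List β} {x : γ}
    (hx : x ∈ zipWith f s t) : ∃ a ∈ s, ∃ b ∈ t, x = f a b := by
  rw [← map_uncurry_zip_eq_zipWith, mem_map] at hx
  obtain ⟨⟨a, b⟩, hab, rfl⟩ := hx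
  exact ⟨a, (of_mem_zip hab).1, b, (of_mem_zip hab).2, rfl⟩

theorem prod_zipWith_inv_mul_dropLast_tail {G : Type*} [Group G] :
    ∀ m : List G,
      (zipWith (fun a b => a⁻¹ * b) m.dropLast m.tail).prod = (m.headD 1)⁻¹ * m.getLastD 1
  | [] => by simp
  | [x] => by simp
  | x :: y :: t => by
    have ih := prod_zipWith_inv_mul_dropLast_tail (y :: t)
    simp only [dropLast_cons_cons, tail_cons, zipWith_cons_cons, prod_cons, headD_cons,
      getLastD_cons] at ih ⊢
    rw [ih, mul_assoc, mul_inv_cancel_left]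

theorem scanl_mul_left {M : Type*} [Semigroup M] (a : M) :
    ∀ (l : List M) (r : M), l.scanl (· * ·) (a * r) = (l.scanl (· * ·) r).map (a * ·)
  | [], r => by simp
  | x :: l, r => by
    rw [scanl_cons, scanl_cons, mul_assoc, scanl_mul_left a l (r * x), map_cons]

end List

section

variable {G : Type*} [Group G]

def piSeq (h : G) (m : List G) : List G :=
  ((m.getLastD 1)⁻¹ * h * m.headD 1) :: List.zipWith (fun a b => a⁻¹ * b) m.dropLast m.tail

theorem pih_eq_piSeq (h : G) (p : G → G) (r : G) (l : List G) :
    pih h p r l = piSeq h (((l.scanl (· * ·) r).tail).map p) :=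
  rfl

theorem prod_piSeq (h : G) (m : List G) :
    (piSeq h m).prod = (m.getLastD 1)⁻¹ * h * m.getLastD 1 := by
  rw [piSeq, List.prod_cons, List.prod_zipWith_inv_mul_dropLast_tail]
  group

theorem piSeq_mem {S : Subgroup G} {h : G} {m : List G} (hh : h ∈ S) (hm : ∀ x ∈ m, x ∈ S) :
    ∀ y ∈ piSeq h m, y ∈ S := by
  intro y hy
  rcases List.mem_cons.mp hy with rfl | hy
  · exact S.mul_mem (S.mul_mem (S.inv_mem (List.getLastD_mem_of_forall_mem S.one_mem hm)) hh)
      (List.headD_mem_of_forall_mem S.one_mem hm)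
  · obtain ⟨a, ha, b, hb, rfl⟩ := List.exists_of_mem_zipWith hy
    exact S.mul_mem (S.inv_mem (hm a (List.dropLast_subset _ ha))) (hm b (List.tail_subset _ hb))

theorem piSeq_map_mul_left {a h : G} (ha : Commute a h) :
    ∀ m : List G, piSeq h (m.map (a * ·)) = piSeq h m
  | [] => rfl
  | x :: t => by
    have hlast : ((x :: t).map (a * ·)).getLastD 1 = a * (x :: t).getLastD 1 := by
      simp only [List.map_cons, List.getLastD_cons, List.getLastD_map]
    rw [piSeq, piSeq, hlast, ← List.map_dropLast, ← List.map_tail, List.zipWith_map,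
      List.map_cons, List.headD_cons, List.headD_cons]
    congr 1
    · rw [mul_inv_rev, mul_assoc _ a⁻¹ h, ha.inv_left.eq]
      group
    · simp only [mul_inv_rev, mul_assoc, inv_mul_cancel_left]

theorem pih_mul_left {a h : G} {p : G → G} (ha : Commute a h) (hp : ∀ g, p (a * g) = a * p g)
    (r : G) (l : List G) : pih h p (a * r) l = pih h p r l := by
  have hcomp : p ∘ (a * ·) = (a * ·) ∘ p := funext hp
  rw [pih_eq_piSeq, pih_eq_piSeq, List.scanl_mul_left, ← List.map_tail, List.map_map, hcomp,
    ← List.map_map, piSeq_map_mul_left ha]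

theorem commute_mul_inv_of_conj_eq {h r r' : G} (e : r⁻¹ * h * r = r'⁻¹ * h * r') :
    Commute (r' * r⁻¹) h :=
  calc r' * r⁻¹ * h = r' * (r⁻¹ * h * r) * r⁻¹ := by group
    _ = r' * (r'⁻¹ * h * r') * r⁻¹ := by rw [e]
    _ = h * (r' * r⁻¹) := by group

end

/-- all entries of `π_h(g_0,...,g_n)` lie in the centralizer `Z_h`, its
entry-product is conjugate in `Z_h` to `h`, and the value is independent of the choice
of `r` with `g_0⋯g_n = r⁻¹ h r`.  Here `p = p_h` is assumed to take values in `Z_h` and to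
satisfy `p_h(a g) = a p_h(g)` for `a ∈ Z_h` (as established for `p_h(g) = g s(Z_h·g)⁻¹`). -/
theorem statement9 {G : Type*} [Group G] (h : G) (p : G → G)
    (hpZ : ∀ g : G, p g * h = h * p g)
    (hpe : ∀ a g : G, a * h = h * a → p (a * g) = a * p g) (n : ℕ) :
    (∀ (l : List G) (r : G), l.length = n + 1 → l.prod = r⁻¹ * h * r →
      (∀ a ∈ pih h p r l, a * h = h * a) ∧
      (∃ a : G, a * h = h * a ∧ (pih h p r l).prod = a⁻¹ * h * a)) ∧
    (∀ (l : List G) (r r' : G), l.length = n + 1 →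
      l.prod = r⁻¹ * h * r → l.prod = r'⁻¹ * h * r' → pih h p r l = pih h p r' l) := by
  let Z := Subgroup.centralizer {h}
  have hhZ : h ∈ Z := Subgroup.mem_centralizer_singleton_iff.mpr rfl
  have hmZ (l : List G) (r : G) : ∀ x ∈ ((l.scanl (· * ·) r).tail).map p, x ∈ Z := by
    simp only [List.mem_map]
    rintro _ ⟨g, -, rfl⟩
    exact Subgroup.mem_centralizer_singleton_iff.mpr (hpZ g)
  refine ⟨fun l r _ _ => ⟨fun a ha => ?_, ?_⟩, fun l r r' _ hr hr' => ?_⟩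
  · rw [pih_eq_piSeq] at ha
    exact Subgroup.mem_centralizer_singleton_iff.mp (piSeq_mem hhZ (hmZ l r) a ha)
  · have hlast : (((l.scanl (· * ·) r).tail).map p).getLastD 1 ∈ (Z : Set G) :=
      List.getLastD_mem_of_forall_mem Z.one_mem (hmZ l r)
    exact ⟨_, Subgroup.mem_centralizer_singleton_iff.mp hlast, prod_piSeq h _⟩
  · have ha := commute_mul_inv_of_conj_eq (hr ▸ hr')
    rw [← pih_mul_left ha (fun g => hpe _ g ha) r l, inv_mul_cancel_right]
end

section
/- Let G be a group, h ∈ G, with maps i^E : Z_h^{•+1} → G^{•+1} (inclusion) and p^E : G^{•+1} → Z_h^{•+1} applying p_h coordinatewise, extended linearly to the complexes E_•(G), E_•(Z_h) with boundary ∂(g_0,...,g_n) = (g_1,...,g_n) + Σ_{k=1}^n (-1)^k (g_0,...,ĝ_k,...,g_n). Define D_0(g_0) = (g_0 s(Z_h·g_0)⁻¹, g_0) and inductively D_n(g_0,...,g_n) = (g_0, (id − i^E p^E − D_{n−1}∂_n)(g_0,...,g_n)) (prepending g_0 to each tuple of the chain). Then id − i^E p^E = D_{n−1}∂_n + ∂_{n+1}D_n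 on E_n(G) for all n ≥ 1, and (id − i^E p^E)(g_0) = ∂_1 D_0(g_0) on E_0(G). -/
/-- The simplicial boundary `∂(g_0,...,g_n) = Σ_{k=0}^n (-1)^k (g_0,...,ĝ_k,...,g_n)`
on a basis tuple of `E_n(G)`. -/
noncomputable def dS {G : Type*} [Group G] (l : List G) : List G →₀ ℂ :=
  ∑ k ∈ Finset.range l.length, ((-1 : ℂ) ^ k) • Finsupp.single (l.eraseIdx k) 1

/-- The simplicial boundary, extended linearly. -/
noncomputable def DS {G : Type*} [Group G] : (List G →₀ ℂ) →ₗ[ℂ] (List G →₀ ℂ) :=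
  Finsupp.lift (List G →₀ ℂ) ℂ (List G) dS

/-- The chain homotopies `D_n`: `D_0(g_0) = (p(g_0), g_0)` and inductively
`D_n(g_0,...,g_n) = (g_0, (id − i^E p^E − D_{n−1}∂)(g_0,...,g_n))`, where prepending `g_0`
is applied linearly. -/
noncomputable def DD {G : Type*} [Group G] (p : G → G) :
    ℕ → (List G →₀ ℂ) →ₗ[ℂ] (List G →₀ ℂ)
  | 0 => Finsupp.lift (List G →₀ ℂ) ℂ (List G)
      (fun l => Finsupp.single (p (l.headD 1) :: l) 1)
  | (n + 1) => Finsupp.lift (List G →₀ ℂ) ℂ (List G)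
      (fun l => Finsupp.mapDomain (fun m => l.headD 1 :: m)
        (Finsupp.single l 1 - Finsupp.single (l.map p) 1 - DD p n (dS l)))

/-! `id − i^E p^E` commutes with `∂` because `p` acts coordinatewise, and prepending `g_0` satisfies
`∂(g_0 · c) = c − g_0 · ∂c`. Hence `∂ D_n x = y − g_0 · ∂y` for `y = (id − i^E p^E − D_{n−1}∂) x`,
and `∂y = 0` as soon as `∂ D_{n−1} ∂ = (id − i^E p^E) ∂`. The latter follows by induction on `n`:
apply the formula in degree `n − 1` to each face and use `∂ ∂ = 0`. -/

namespace BarHomotopy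

variable {G : Type*} [Group G]

lemma DS_single (l : List G) (b : ℂ) : DS (Finsupp.single l b) = b • dS l := by
  simp [DS, Finsupp.lift_apply, Finsupp.sum_single_index]

lemma DD_zero_single (p : G → G) (l : List G) :
    DD p 0 (Finsupp.single l 1) = Finsupp.single (p (l.headD 1) :: l) 1 := by
  simp [DD, Finsupp.lift_apply, Finsupp.sum_single_index]

lemma DD_succ_single (p : G → G) (n : ℕ) (l : List G) :
    DD p (n + 1) (Finsupp.single l 1) =
      Finsupp.mapDomain (l.headD 1 :: ·)
        (Finsupp.single l 1 - Finsupp.single (l.map p) 1 - DD p n (dS l)) := by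
  simp [DD, Finsupp.lift_apply, Finsupp.sum_single_index]

lemma dS_cons (a : G) (m : List G) :
    dS (a :: m) = Finsupp.single m 1 - Finsupp.mapDomain (a :: ·) (dS m) := by
  rw [dS, List.length_cons, Finset.sum_range_succ', dS, Finsupp.mapDomain_finsetSum,
    sub_eq_add_neg, ← Finset.sum_neg_distrib, add_comm]
  simp [pow_succ]

lemma DS_mapDomain_cons (a : G) (c : List G →₀ ℂ) :
    DS (Finsupp.mapDomain (a :: ·) c) = c - Finsupp.mapDomain (a :: ·) (DS c) := by
  induction c using Finsupp.induction_linear with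
  | zero => simp
  | add f g hf hg =>
      rw [Finsupp.mapDomain_add, map_add, hf, hg, map_add, Finsupp.mapDomain_add]
      abel
  | single m b =>
      rw [Finsupp.mapDomain_single, DS_single, DS_single, dS_cons, Finsupp.mapDomain_smul,
        smul_sub, Finsupp.smul_single, smul_eq_mul, mul_one]

lemma DS_dS (l : List G) : DS (dS l) = 0 := by
  induction l with
  | nil => simp [dS]
  | cons a m ih => simp [dS_cons, DS_single, DS_mapDomain_cons, ih]

lemma dS_map (p : G → G) (l : List G) :
    dS (l.map p) = Finsupp.mapDomain (List.map p) (dS l) := by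
  simp [dS, Finsupp.mapDomain_finsetSum, List.eraseIdx_map]

/-- `∂ ∂ = 0` kills the correction `T ∂` once the formula is summed over the faces of `l`. -/
lemma DS_DD_dS_of_forall_single (p : G → G) (n : ℕ) (T : (List G →₀ ℂ) →ₗ[ℂ] (List G →₀ ℂ))
    (hT : ∀ m : List G, m.length = n + 1 →
      DS (DD p n (Finsupp.single m 1)) = Finsupp.single m 1 - Finsupp.single (m.map p) 1 - T (dS m))
    (l : List G) (hl : l.length = n + 2) :
    DS (DD p n (dS l)) = dS l - dS (l.map p) := by
  let F : (List G →₀ ℂ) →ₗ[ℂ] (List G →₀ ℂ) :=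
    LinearMap.id - Finsupp.lmapDomain ℂ ℂ (List.map p) - T ∘ₗ DS
  have hF : (DS ∘ₗ DD p n) (dS l) = F (dS l) := by
    rw [dS, map_sum, map_sum]
    refine Finset.sum_congr rfl fun k hk => ?_
    have hk : (l.eraseIdx k).length = n + 1 := by
      rw [List.length_eraseIdx_of_lt (Finset.mem_range.mp hk)]
      omega
    rw [map_smul, map_smul, LinearMap.comp_apply, hT _ hk]
    simp [F, DS_single]
  simpa [F, DS_dS, dS_map] using hF

lemma DS_DD_succ_single (p : G → G) (n : ℕ) (l : List G)
    (hl : DS (DD p n (dS l)) = dS l - dS (l.map p)) :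
    DS (DD p (n + 1) (Finsupp.single l 1)) =
      Finsupp.single l 1 - Finsupp.single (l.map p) 1 - DD p n (dS l) := by
  have hcycle : DS (Finsupp.single l 1 - Finsupp.single (l.map p) 1 - DD p n (dS l)) = 0 := by
    simp [DS_single, hl]
  rw [DD_succ_single, DS_mapDomain_cons, hcycle, Finsupp.mapDomain_zero, sub_zero]

lemma DS_DD_zero_single (p : G → G) (g : G) :
    DS (DD p 0 (Finsupp.single [g] 1)) = Finsupp.single [g] 1 - Finsupp.single [p g] 1 := by
  rw [DD_zero_single, DS_single, one_smul, List.headD_cons, dS_cons, dS_cons]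
  simp [dS]

lemma DS_DD_dS (p : G → G) (n : ℕ) (l : List G) (hl : l.length = n + 2) :
    DS (DD p n (dS l)) = dS l - dS (l.map p) := by
  induction n generalizing l with
  | zero =>
      refine DS_DD_dS_of_forall_single p 0 0 (fun m hm => ?_) l hl
      obtain ⟨g, rfl⟩ := List.length_eq_one_iff.mp hm
      simp [DS_DD_zero_single]
  | succ n ih =>
      exact DS_DD_dS_of_forall_single p (n + 1) (DD p n)
        (fun m hm => DS_DD_succ_single p n m (ih m hm)) l hl

end BarHomotopy

open BarHomotopy in
theorem statement12_general {G : Type*} [Group G] (s : G → G) :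
    (∀ g : G,
      Finsupp.single [g] (1 : ℂ) - Finsupp.single [g * (s g)⁻¹] 1
        = DS (DD (fun g => g * (s g)⁻¹) 0 (Finsupp.single [g] 1))) ∧
    (∀ (n : ℕ) (l : List G), l.length = n + 2 →
      Finsupp.single l (1 : ℂ) - Finsupp.single (l.map (fun g => g * (s g)⁻¹)) 1
        = DD (fun g => g * (s g)⁻¹) n (dS l)
          + DS (DD (fun g => g * (s g)⁻¹) (n + 1) (Finsupp.single l 1))) := by
  set p : G → G := fun g => g * (s g)⁻¹
  refine ⟨fun g => (DS_DD_zero_single p g).symm, fun n l hl => ?_⟩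
  rw [DS_DD_succ_single p n l (DS_DD_dS p n l hl)]
  abel

/-- for `p = p_h` built from a section `s` of `Z_h\G`, the maps `D_n`
satisfy `(id − i^E p^E)(g_0) = ∂_1 D_0 (g_0)` on `E_0(G)` and
`id − i^E p^E = D_{n−1} ∂_n + ∂_{n+1} D_n` on `E_n(G)` for `n ≥ 1`. -/
theorem statement12 {G : Type*} [Group G] (h : G) (s : G → G)
    (hcoset : ∀ g : G, (g * (s g)⁻¹) * h = h * (g * (s g)⁻¹))
    (hconst : ∀ g₁ g₂ : G, (g₁ * g₂⁻¹) * h = h * (g₁ * g₂⁻¹) → s g₁ = s g₂) :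
    (∀ g : G,
      Finsupp.single [g] (1 : ℂ) - Finsupp.single [g * (s g)⁻¹] 1
        = DS (DD (fun g => g * (s g)⁻¹) 0 (Finsupp.single [g] 1))) ∧
    (∀ (n : ℕ) (l : List G), l.length = n + 2 →
      Finsupp.single l (1 : ℂ) - Finsupp.single (l.map (fun g => g * (s g)⁻¹)) 1
        = DD (fun g => g * (s g)⁻¹) n (dS l)
          + DS (DD (fun g => g * (s g)⁻¹) (n + 1) (Finsupp.single l 1))) :=
  statement12_general s
end

section
/- Let G be a δ-hyperbolic group (in the sense that geodesic triangles in a Cayley graph are δ-slim). Then G has a linearly solvable conjugacy bound at every g ∈ G: there is a polynomial P(t) (of degree one, with coefficients depending linearly on δ and |g|) such that for every h conjugate to g there exists r ∈ G with h = r⁻¹ g r and |r| ≤ P(|h|). -/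
/-- Word length with respect to a generating set `S`. -/
noncomputable def wlen {G : Type*} [Group G] (S : Set G) (g : G) : ℕ :=
  sInf {n | ∃ l : List G, l.length = n ∧ (∀ x ∈ l, x ∈ S) ∧ l.prod = g}

/-- The word metric on `G`. -/
noncomputable def wdist {G : Type*} [Group G] (S : Set G) (a b : G) : ℕ :=
  wlen S (a⁻¹ * b)

section aux
variable {G : Type*} [Group G] {S : Set G}

lemma wlen_le_of_word {l : List G} (hl : ∀ x ∈ l, x ∈ S) : wlen S l.prod ≤ l.length :=
  Nat.sInf_le ⟨l, rfl, hl, rfl⟩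

lemma exists_word (hsym : ∀ x ∈ S, x⁻¹ ∈ S) (hgen : Subgroup.closure S = ⊤) (g : G) :
    ∃ l : List G, (∀ x ∈ l, x ∈ S) ∧ l.prod = g := by
  have hg : g ∈ Subgroup.closure S := hgen ▸ Subgroup.mem_top g
  induction hg using Subgroup.closure_induction with
  | mem x hx => exact ⟨[x], by simpa using hx, by simp⟩
  | one => exact ⟨[], by simp, by simp⟩
  | mul x y _ _ hx hy =>
    obtain ⟨l1, h1, p1⟩ := hx
    obtain ⟨l2, h2, p2⟩ := hy
    refine ⟨l1 ++ l2, ?_, by simp [p1, p2]⟩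
    intro z hz
    rcases List.mem_append.1 hz with h | h
    exacts [h1 z h, h2 z h]
  | inv x _ hx =>
    obtain ⟨l, h1, p1⟩ := hx
    refine ⟨(l.map (·⁻¹)).reverse, ?_, ?_⟩
    · intro z hz
      simp only [List.mem_reverse, List.mem_map] at hz
      obtain ⟨w, hw, rfl⟩ := hz
      exact hsym w (h1 w hw)
    · rw [← p1, ← List.prod_inv_reverse]

lemma wlen_spec (hsym : ∀ x ∈ S, x⁻¹ ∈ S) (hgen : Subgroup.closure S = ⊤) (g : G) :
    ∃ l : List G, l.length = wlen S g ∧ (∀ x ∈ l, x ∈ S) ∧ l.prod = g := by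
  obtain ⟨l, h1, h2⟩ := exists_word hsym hgen g
  have : wlen S g ∈ {n | ∃ l : List G, l.length = n ∧ (∀ x ∈ l, x ∈ S) ∧ l.prod = g} :=
    Nat.sInf_mem ⟨l.length, l, rfl, h1, h2⟩
  exact this

lemma wlen_one : wlen S (1 : G) = 0 :=
  Nat.le_zero.mp (by simpa using wlen_le_of_word (S := S) (l := []) (by simp))

lemma wlen_mul_le (hsym : ∀ x ∈ S, x⁻¹ ∈ S) (hgen : Subgroup.closure S = ⊤) (a b : G) :
    wlen S (a * b) ≤ wlen S a + wlen S b := by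
  obtain ⟨l1, e1, h1, p1⟩ := wlen_spec hsym hgen a
  obtain ⟨l2, e2, h2, p2⟩ := wlen_spec hsym hgen b
  have := wlen_le_of_word (S := S) (l := l1 ++ l2) (by
    intro z hz; rcases List.mem_append.1 hz with h | h; exacts [h1 z h, h2 z h])
  simpa [p1, p2, e1, e2] using this

lemma wlen_inv_le (hsym : ∀ x ∈ S, x⁻¹ ∈ S) (hgen : Subgroup.closure S = ⊤) (a : G) :
    wlen S a⁻¹ ≤ wlen S a := by
  obtain ⟨l, e, h1, p1⟩ := wlen_spec hsym hgen a
  have := wlen_le_of_word (S := S) (l := (l.map (·⁻¹)).reverse) (by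
    intro z hz
    simp only [List.mem_reverse, List.mem_map] at hz
    obtain ⟨w, hw, rfl⟩ := hz
    exact hsym w (h1 w hw))
  rw [← List.prod_inv_reverse, p1] at this
  simpa [e] using this

lemma wlen_inv (hsym : ∀ x ∈ S, x⁻¹ ∈ S) (hgen : Subgroup.closure S = ⊤) (a : G) :
    wlen S a⁻¹ = wlen S a :=
  le_antisymm (wlen_inv_le hsym hgen a)
    (by simpa using wlen_inv_le hsym hgen a⁻¹)

lemma wdist_one_left (a : G) : wdist S 1 a = wlen S a := by simp [wdist]

lemma wdist_symm (hsym : ∀ x ∈ S, x⁻¹ ∈ S) (hgen : Subgroup.closure S = ⊤) (a b : G) :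
    wdist S a b = wdist S b a := by
  unfold wdist
  rw [← wlen_inv hsym hgen (a⁻¹ * b)]
  simp [mul_inv_rev]

lemma wdist_triangle (hsym : ∀ x ∈ S, x⁻¹ ∈ S) (hgen : Subgroup.closure S = ⊤) (a b c : G) :
    wdist S a c ≤ wdist S a b + wdist S b c := by
  unfold wdist
  have := wlen_mul_le hsym hgen (a⁻¹ * b) (b⁻¹ * c)
  simpa [mul_assoc] using this

lemma wdist_mul_left (x a b : G) : wdist S (x * a) (x * b) = wdist S a b := by
  simp [wdist, mul_assoc]

end aux


/-- A (discrete) geodesic from `a` to `b` in the Cayley graph of `(G, S)`. -/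
def IsGeodesic {G : Type*} [Group G] (S : Set G) (a b : G) (c : ℕ → G) : Prop :=
  c 0 = a ∧ c (wdist S a b) = b ∧
    ∀ i j : ℕ, i ≤ wdist S a b → j ≤ wdist S a b →
      wdist S (c i) (c j) = ((i : ℤ) - j).natAbs

section geo
variable {G : Type*} [Group G] {S : Set G}
variable (hsym : ∀ x ∈ S, x⁻¹ ∈ S) (hgen : Subgroup.closure S = ⊤)
include hsym hgen

lemma exists_geodesic_one (b : G) : ∃ c : ℕ → G, IsGeodesic S 1 b c := by
  obtain ⟨l, e, hl, hp⟩ := wlen_spec hsym hgen b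
  have hw : wdist S 1 b = l.length := by rw [wdist_one_left, e]
  refine ⟨fun i => (l.take i).prod, by simp, ?_, ?_⟩
  · show (l.take (wdist S 1 b)).prod = b
    rw [hw, List.take_length, hp]
  have key : ∀ i j : ℕ, i ≤ j → j ≤ wdist S 1 b →
      wdist S ((l.take i).prod) ((l.take j).prod) = j - i := by
    intro i j hij hj
    rw [hw] at hj
    have hsplit : l.take j = l.take i ++ (l.drop i).take (j - i) := by
      rw [← List.take_add]
      congr 1
      omega
    have hmid : ((l.take i).prod)⁻¹ * (l.take j).prod = ((l.drop i).take (j - i)).prod := by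
      rw [hsplit, List.prod_append]
      group
    have hup : wdist S ((l.take i).prod) ((l.take j).prod) ≤ j - i := by
      rw [wdist, hmid]
      have := wlen_le_of_word (S := S) (l := (l.drop i).take (j - i)) (by
        intro z hz
        exact hl z (List.mem_of_mem_drop (List.mem_of_mem_take hz)))
      refine this.trans ?_
      simp [List.length_take, List.length_drop]
    have hlow : l.length ≤ i + wdist S ((l.take i).prod) ((l.take j).prod) + (l.length - j) := by
      have h1 : wlen S ((l.take i).prod) ≤ i := by
        have := wlen_le_of_word (S := S) (l := l.take i)
          (fun z hz => hl z (List.mem_of_mem_take hz))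
        refine this.trans ?_
        simp [List.length_take]
      have h2 : wdist S ((l.take j).prod) b ≤ l.length - j := by
        have hdrop : ((l.take j).prod)⁻¹ * b = (l.drop j).prod := by
          have hb : b = (l.take j).prod * (l.drop j).prod := by
            rw [← List.prod_append, List.take_append_drop, hp]
          rw [hb]; group
        rw [wdist, hdrop]
        have := wlen_le_of_word (S := S) (l := l.drop j)
          (fun z hz => hl z (List.mem_of_mem_drop hz))
        refine this.trans ?_
        simp [List.length_drop]
      have htri : wlen S b ≤ wlen S ((l.take i).prod)
          + wdist S ((l.take i).prod) ((l.take j).prod)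
          + wdist S ((l.take j).prod) b := by
        calc wlen S b = wlen S (((l.take i).prod) * ((((l.take i).prod)⁻¹ * (l.take j).prod))
              * ((((l.take j).prod)⁻¹ * b))) := by group
          _ ≤ _ := by
              refine (wlen_mul_le hsym hgen _ _).trans ?_
              exact Nat.add_le_add_right (wlen_mul_le hsym hgen _ _) _
      rw [← e] at *
      omega
    omega
  intro i j hi hj
  rcases le_total i j with hij | hij
  · rw [key i j hij hj]; omega
  · rw [wdist_symm hsym hgen, key j i hij hi]; omega

omit hsym hgen in
lemma IsGeodesic.translate {a b : G} {c : ℕ → G} (hc : IsGeodesic S a b c) (x : G) :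
    IsGeodesic S (x * a) (x * b) (fun i => x * c i) := by
  obtain ⟨h0, h1, h2⟩ := hc
  refine ⟨by simp [h0], ?_, ?_⟩
  · rw [wdist_mul_left]; simp [h1]
  · intro i j hi hj
    rw [wdist_mul_left] at *
    exact h2 i j hi hj

lemma exists_geodesic (a b : G) : ∃ c : ℕ → G, IsGeodesic S a b c := by
  obtain ⟨c, hc⟩ := exists_geodesic_one hsym hgen (a⁻¹ * b)
  refine ⟨fun i => a * c i, ?_⟩
  have := hc.translate a
  simpa using this

lemma IsGeodesic.symm {a b : G} {c : ℕ → G} (hc : IsGeodesic S a b c) :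
    IsGeodesic S b a (fun m => c (wdist S a b - m)) := by
  obtain ⟨h0, h1, h2⟩ := hc
  have hba : wdist S b a = wdist S a b := wdist_symm hsym hgen b a
  refine ⟨by simp [h1], by simp [hba, h0], ?_⟩
  intro i j hi hj
  rw [hba] at hi hj
  rw [h2 _ _ (by omega) (by omega)]
  omega
end geo


/-- `δ`-slimness of all geodesic triangles in the Cayley graph of `(G, S)`: every point on
one side is within distance `δ` of a point of one of the other two sides. -/
def SlimTriangles {G : Type*} [Group G] (S : Set G) (δ : ℕ) : Prop :=
  ∀ a b c : G, ∀ f g k : ℕ → G,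
    IsGeodesic S a b f → IsGeodesic S b c g → IsGeodesic S a c k →
      ∀ i ≤ wdist S a b, ∃ j : ℕ,
        (j ≤ wdist S b c ∧ wdist S (f i) (g j) ≤ δ) ∨
        (j ≤ wdist S a c ∧ wdist S (f i) (k j) ≤ δ)

section main
variable {G : Type*} [Group G] {S : Set G}
variable (hsym : ∀ x ∈ S, x⁻¹ ∈ S) (hgen : Subgroup.closure S = ⊤)
include hsym hgen

lemma ball_finite (hfin : S.Finite) (K : ℕ) : {x : G | wlen S x ≤ K}.Finite := by
  induction K with
  | zero =>
    refine Set.Finite.subset (Set.finite_singleton 1) ?_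
    intro x hx
    simp only [Set.mem_setOf_eq] at hx
    obtain ⟨l, e, _, hp⟩ := wlen_spec hsym hgen x
    have : l = [] := List.length_eq_zero_iff.mp (by omega)
    simp [this] at hp
    simp [← hp]
  | succ K ih =>
    refine Set.Finite.subset ((Set.finite_singleton (1:G)).union
      (Set.Finite.image2 (· * ·) hfin ih)) ?_
    intro x hx
    simp only [Set.mem_setOf_eq] at hx
    obtain ⟨l, e, hl, hp⟩ := wlen_spec hsym hgen x
    match l, e with
    | [], _ => left; simp [← hp]
    | s :: t, e =>
      right
      refine Set.mem_image2.mpr ⟨s, hl s (by simp), t.prod, ?_, by simp [← hp]⟩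
      have := wlen_le_of_word (S := S) (l := t) (fun z hz => hl z (by simp [hz]))
      simp only [List.length_cons] at e
      simp only [Set.mem_setOf_eq]
      omega

lemma key_middle (δ : ℕ) (hslim : SlimTriangles S δ) (g h r : G)
    (hconj : r⁻¹ * g * r = h) (c : ℕ → G) (hc : IsGeodesic S 1 r c)
    (i : ℕ) (hi : i ≤ wlen S r) (hiA : 2 * δ + wlen S g < i)
    (hiE : i + (δ + wlen S h) < wlen S r) :
    wlen S ((c i)⁻¹ * g * c i) ≤ 4 * δ + wlen S g := by
  have hn : wdist S 1 r = wlen S r := wdist_one_left r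
  set n := wlen S r with hndef
  have hgr : g * r = r * h := by
    rw [← hconj]; group
  obtain ⟨g1, hg1⟩ := exists_geodesic hsym hgen r (r * h)
  obtain ⟨k1, hk1⟩ := exists_geodesic hsym hgen 1 (r * h)
  have hdist1i : ∀ m, m ≤ n → wdist S 1 (c m) = m := by
    intro m hm
    have := hc.2.2 0 m (by omega) (by omega)
    rw [hc.1] at this
    rw [wdist_symm hsym hgen] at this
    rw [wdist_symm hsym hgen]
    omega
  obtain ⟨j, hj⟩ := hslim 1 r (r * h) c g1 k1 hc hg1 hk1 i (by omega)
  rcases hj with ⟨hjle, hjd⟩ | ⟨hjle, hjd⟩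
  · -- close to side [r, r*h]: contradiction with hiE
    exfalso
    have hrh : wdist S r (r * h) = wlen S h := by simp [wdist]
    have h1 : wdist S (g1 j) r = j := by
      have := hg1.2.2 0 j (by omega) hjle
      rw [hg1.1, wdist_symm hsym hgen] at this
      omega
    have h2 : wdist S (c i) r = n - i := by
      have := hc.2.2 i n (by omega) (by omega)
      have hcn : c (wdist S 1 r) = r := hc.2.1
      rw [hn] at hcn
      rw [hcn] at this
      omega
    have := wdist_triangle hsym hgen (c i) (g1 j) r
    rw [hrh] at hjle
    omega
  · -- c i is δ-close to k1 j on the diagonal [1, r*h]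
    -- second triangle: 1, r*h, g
    have hg2 : IsGeodesic S (r * h) g (fun m => g * c (wdist S 1 r - m)) := by
      have := (hc.symm hsym hgen).translate g
      rw [hgr] at this
      simpa using this
    obtain ⟨k2, hk2⟩ := exists_geodesic hsym hgen 1 g
    obtain ⟨m, hm⟩ := hslim 1 (r * h) g k1 (fun m => g * c (wdist S 1 r - m)) k2
      hk1 hg2 hk2 j hjle
    rcases hm with ⟨hmle, hmd⟩ | ⟨hmle, hmd⟩
    · -- close to g * c k
      have hrhg : wdist S (r * h) g = n := by
        rw [← hgr]
        have : wdist S (g * r) (g * 1) = wdist S r 1 := wdist_mul_left g r 1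
        rw [mul_one] at this
        rw [this, wdist_symm hsym hgen, hn]
      set k := wdist S 1 r - m with hkdef
      have hkn : k ≤ n := by omega
      have hd2 : wdist S (c i) (g * c k) ≤ 2 * δ := by
        have t1 := wdist_triangle hsym hgen (c i) (k1 j) (g * c k)
        have : wdist S (k1 j) ((fun m => g * c (wdist S 1 r - m)) m) ≤ δ := hmd
        simp only at this
        omega
      have e1 : wdist S 1 (c i) = i := hdist1i i (by omega)
      have e2 : wdist S g (g * c k) = k := by
        have : wdist S (g * 1) (g * c k) = wdist S 1 (c k) := wdist_mul_left g 1 (c k)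
        rw [mul_one] at this
        rw [this, hdist1i k hkn]
      have e3 : wdist S 1 g = wlen S g := wdist_one_left g
      -- |i - k| ≤ 2δ + |g|
      have t2 := wdist_triangle hsym hgen 1 g (g * c k)
      have t3 := wdist_triangle hsym hgen g 1 (g * c k)
      have t4 := wdist_triangle hsym hgen 1 (c i) (g * c k)
      have t5 := wdist_triangle hsym hgen 1 (g * c k) (c i)
      have s1 : wdist S (g * c k) (c i) = wdist S (c i) (g * c k) :=
        wdist_symm hsym hgen _ _
      have s2 : wdist S g 1 = wlen S g := by rw [wdist_symm hsym hgen, e3]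
      have hik : wdist S (c k) (c i) = ((k : ℤ) - i).natAbs :=
        hc.2.2 k i (by omega) (by omega)
      have habs : wdist S (c k) (c i) ≤ 2 * δ + wlen S g := by omega
      -- final triangle
      have t6 := wdist_triangle hsym hgen (c i) (g * c k) (g * c i)
      have e4 : wdist S (g * c k) (g * c i) = wdist S (c k) (c i) :=
        wdist_mul_left g (c k) (c i)
      have : wdist S (c i) (g * c i) ≤ 4 * δ + wlen S g := by omega
      calc wlen S ((c i)⁻¹ * g * c i) = wdist S (c i) (g * c i) := by
            rw [wdist]; congr 1; group
        _ ≤ 4 * δ + wlen S g := this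
    · -- close to side [1, g]: contradiction with hiA
      exfalso
      have e1 : wdist S 1 (k2 m) = m := by
        have := hk2.2.2 0 m (by omega) (by omega)
        rw [hk2.1] at this
        omega
      have e2 : wdist S 1 (c i) = i := hdist1i i (by omega)
      have t1 := wdist_triangle hsym hgen 1 (k2 m) (k1 j)
      have t2 := wdist_triangle hsym hgen 1 (k1 j) (c i)
      have s1 : wdist S (k1 j) (c i) = wdist S (c i) (k1 j) := wdist_symm hsym hgen _ _
      have e3 : wdist S 1 g = wlen S g := wdist_one_left g
      have s3 : wdist S (k2 m) (k1 j) = wdist S (k1 j) (k2 m) := wdist_symm hsym hgen _ _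
      omega

end main


/-- a `δ`-hyperbolic group has a linearly solvable conjugacy bound at every
`g`: there is a polynomial `P` of degree at most one such that every `h` conjugate to `g`
admits a conjugator `r` with `h = r⁻¹ g r` and `|r| ≤ P(|h|)`. -/
theorem statement14 {G : Type*} [Group G] (S : Set G) (hfin : S.Finite)
    (hsym : ∀ x ∈ S, x⁻¹ ∈ S) (hgen : Subgroup.closure S = ⊤)
    (δ : ℕ) (hslim : SlimTriangles S δ) (g : G) :
    ∃ P : Polynomial ℝ, P.natDegree ≤ 1 ∧
      ∀ h : G, IsConj g h → ∃ r : G,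
        r⁻¹ * g * r = h ∧ (wlen S r : ℝ) ≤ P.eval (wlen S h : ℝ) := by
  classical
  have hball := ball_finite hsym hgen hfin (4 * δ + wlen S g)
  set N := hball.toFinset.card with hNdef
  set K : ℕ := N + 3 * δ + wlen S g + 2 with hKdef
  refine ⟨Polynomial.X + Polynomial.C (K : ℝ), ?_, ?_⟩
  · exact le_of_eq (Polynomial.natDegree_X_add_C _)
  · intro h hconj
    obtain ⟨u, hu⟩ := isConj_iff.mp hconj
    have hne : Set.Nonempty {m | ∃ r : G, r⁻¹ * g * r = h ∧ wlen S r = m} :=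
      ⟨wlen S u⁻¹, u⁻¹, by rw [inv_inv]; exact hu, rfl⟩
    have hmem : sInf {m | ∃ r : G, r⁻¹ * g * r = h ∧ wlen S r = m}
        ∈ {m | ∃ r : G, r⁻¹ * g * r = h ∧ wlen S r = m} := Nat.sInf_mem hne
    set n := sInf {m | ∃ r : G, r⁻¹ * g * r = h ∧ wlen S r = m} with hndef
    obtain ⟨r, hr, hrlen⟩ := hmem
    refine ⟨r, hr, ?_⟩
    rw [hrlen]
    suffices hfinal : n ≤ wlen S h + K by
      have hcast : (n : ℝ) ≤ (wlen S h : ℝ) + (K : ℝ) := by exact_mod_cast hfinal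
      simpa using hcast
    by_contra hbig
    push_neg at hbig
    obtain ⟨c, hc⟩ := exists_geodesic hsym hgen 1 r
    have hwr : wlen S r = n := hrlen
    have hw1 : wdist S 1 r = n := by rw [wdist_one_left, hwr]
    set A := 2 * δ + wlen S g with hA
    set B := n - (δ + wlen S h) with hB
    have hmap : ∀ i ∈ Finset.Ioo A B, (c i)⁻¹ * g * c i ∈ hball.toFinset := by
      intro i hi
      simp only [Finset.mem_Ioo] at hi
      rw [Set.Finite.mem_toFinset]
      exact key_middle hsym hgen δ hslim g h r hr c hc i (by omega) (by omega) (by omega)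
    have claim : ∀ i ∈ Finset.Ioo A B, ∀ j ∈ Finset.Ioo A B, i < j →
        (c i)⁻¹ * g * c i ≠ (c j)⁻¹ * g * c j := by
      intro i hi j hj hij heq
      simp only [Finset.mem_Ioo] at hi hj
      set r' := c i * ((c j)⁻¹ * r) with hr'
      have hconj' : r'⁻¹ * g * r' = h := by
        have e1 : r'⁻¹ * g * r' = (((c j)⁻¹ * r)⁻¹) * ((c i)⁻¹ * g * c i)
            * ((c j)⁻¹ * r) := by rw [hr']; group
        rw [heq] at e1
        rw [e1, ← hr]
        group
      have h1 : wlen S (c i) = i := by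
        have := hc.2.2 0 i (by omega) (by omega)
        rw [hc.1] at this
        rw [← wdist_one_left]
        omega
      have h2 : wlen S ((c j)⁻¹ * r) = n - j := by
        have := hc.2.2 j (wdist S 1 r) (by omega) le_rfl
        rw [hc.2.1] at this
        show wdist S (c j) r = n - j
        omega
      have hlen' : wlen S r' ≤ i + (n - j) := by
        calc wlen S r' ≤ wlen S (c i) + wlen S ((c j)⁻¹ * r) :=
              wlen_mul_le hsym hgen _ _
          _ = i + (n - j) := by rw [h1, h2]
      have hmin : n ≤ wlen S r' := Nat.sInf_le ⟨r', hconj', rfl⟩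
      omega
    have hinj : Set.InjOn (fun i => (c i)⁻¹ * g * c i) ↑(Finset.Ioo A B) := by
      intro i hi j hj heq
      rw [Finset.mem_coe] at hi hj
      rcases lt_trichotomy i j with hlt | he | hlt
      · exact absurd heq (claim i hi j hj hlt)
      · exact he
      · exact absurd heq.symm (claim j hj i hi hlt)
    have hcard := Finset.card_le_card_of_injOn _ hmap hinj
    rw [Nat.card_Ioo] at hcard
    omega
end

section
/- Let G be a group, h ∈ G, and x = [h] the conjugacy class of h. The induced map ϑ̄_h : E_•(G) ⊗_{ℂZ_h} ℂ → C_•(ℂG)_x, from ϑ_h(g_0,...,g_n) = (g_n⁻¹ h g_0, g_0⁻¹g_1,...,g_{n-1}⁻¹g_n), is a well-defined ℂ-linear isomorphism: ϑ_h factors through Z_h-coinvariants, and the induced map on coinvariants is bijective. -/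
/-- `ϑ_h(g_0,...,g_n) = (g_n⁻¹ h g_0, g_0⁻¹ g_1, ..., g_{n-1}⁻¹ g_n)`. -/
def thetaMap {G : Type*} [Group G] (h : G) (l : List G) : List G :=
  ((l.getLastD 1)⁻¹ * h * l.headD 1) :: List.zipWith (fun a b => a⁻¹ * b) l.dropLast l.tail

/-- The linear extension `Θ` of `ϑ_h` to `E_•(G)`. -/
noncomputable def Theta {G : Type*} [Group G] (h : G) :
    (List G →₀ ℂ) →ₗ[ℂ] (List G →₀ ℂ) :=
  Finsupp.lift (List G →₀ ℂ) ℂ (List G) (fun l => Finsupp.single (thetaMap h l) 1)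

/-! A nonempty tuple is `scanl (· * ·) g₀ t`: it is determined by its first entry `g₀` and its
successive quotients `t`. In these coordinates `ϑ_h (g₀, t) = ((g₀ * t.prod)⁻¹ * h * g₀) :: t` and
`a ∈ Z_h` acts by `g₀ ↦ a * g₀`. Hence `ϑ_h` is `Z_h`-invariant, its fibres are exactly the
`Z_h`-orbits (the conjugate `g₀⁻¹ * h * g₀` determines `g₀` up to left multiplication by `Z_h`),
and its image consists of the tuples whose product is conjugate to `h`. For the induced map of
free modules, the image of the span of a set `S` of basis vectors is spanned by the image of `S`,
and its kernel on that span is spanned by the differences of basis vectors in a common fibre. -/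

namespace Finsupp

variable {α β R : Type*}

theorem span_setOf_single_eq_supported [Semiring R] (p : α → Prop) :
    Submodule.span R {v : α →₀ R | ∃ a, p a ∧ v = single a 1} = supported R R {a | p a} := by
  rw [supported_eq_span_single]
  congr 1
  ext v
  simp [eq_comm]

theorem supported_inf_ker_lmapDomain [Ring R] (f : α → β) (s : Set α) :
    supported R R s ⊓ LinearMap.ker (lmapDomain R R f)
      = Submodule.span R {v | ∃ x ∈ s, ∃ y ∈ s, f x = f y ∧ v = single x 1 - single y 1} := by
  classical
  apply le_antisymm
  · rintro g ⟨hgs : g ∈ supported R R s, hg : g ∈ LinearMap.ker _⟩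
    rw [mem_supported] at hgs
    rw [LinearMap.mem_ker, lmapDomain_apply] at hg
    cases isEmpty_or_nonempty α
    · simp [Subsingleton.elim g 0]
    -- subtracting from `g` its image under a section `ρ` of `f` over `f '' s` changes nothing,
    -- and leaves a combination of fibre differences
    set ρ := Function.invFunOn f s
    have hρ : mapDomain (ρ ∘ f) g = 0 := by rw [mapDomain_comp, hg, mapDomain_zero]
    have hdecomp : g = g.sum fun x c => c • (single x 1 - single (ρ (f x)) 1) := by
      simp only [smul_sub, smul_single_one, sum_sub, sum_single]
      rw [← mapDomain, ← Function.comp_def, hρ, sub_zero]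
    rw [hdecomp]
    refine Submodule.sum_mem _ fun x hx => Submodule.smul_mem _ _ ?_
    have hxs : x ∈ s := hgs hx
    have hfib : ∃ y ∈ s, f y = f x := ⟨x, hxs, rfl⟩
    exact Submodule.subset_span
      ⟨x, hxs, _, Function.invFunOn_mem hfib, (Function.invFunOn_eq hfib).symm, rfl⟩
  · rw [Submodule.span_le]
    rintro _ ⟨x, hx, y, hy, hxy, rfl⟩
    refine ⟨sub_mem (single_mem_supported R 1 hx) (single_mem_supported R 1 hy), ?_⟩
    simp [mapDomain_sub, hxy]

end Finsupp

namespace List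

theorem map_mul_left_scanl {M : Type*} [Semigroup M] (a g : M) (t : List M) :
    (scanl (· * ·) g t).map (a * ·) = scanl (· * ·) (a * g) t := by
  induction t generalizing g with
  | nil => simp
  | cons k t ih => simp [scanl_cons, mul_assoc, ih]

theorem headD_scanl {α β : Type*} (f : β → α → β) (b d : β) (t : List α) :
    (scanl f b t).headD d = b := by
  cases t <;> simp [scanl_cons]

theorem getLastD_scanl_mul {M : Type*} [Monoid M] (g d : M) (t : List M) :
    (scanl (· * ·) g t).getLastD d = g * t.prod := by
  induction t generalizing g d with
  | nil => simp
  | cons k t ih => rw [scanl_cons, getLastD_cons, ih, prod_cons, mul_assoc]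

theorem zipWith_inv_mul_scanl_mul {G : Type*} [Group G] (g : G) (t : List G) :
    zipWith (fun a b => a⁻¹ * b) (scanl (· * ·) g t).dropLast (scanl (· * ·) g t).tail = t := by
  induction t generalizing g with
  | nil => simp
  | cons k t ih =>
    cases t with
    | nil => simp
    | cons k' t =>
      have ih' := ih (g * k)
      simp only [scanl_cons, tail_cons] at ih' ⊢
      rw [dropLast_cons_cons, zipWith_cons_cons, ih', inv_mul_cancel_left]

theorem exists_scanl_mul_eq {G : Type*} [Group G] {l : List G} (hl : l ≠ []) :
    ∃ g t, scanl (· * ·) g t = l := by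
  induction l with
  | nil => exact absurd rfl hl
  | cons x l ih =>
    rcases eq_or_ne l [] with rfl | hl'
    · exact ⟨x, [], rfl⟩
    · obtain ⟨g, t, rfl⟩ := ih hl'
      exact ⟨x, (x⁻¹ * g) :: t, by simp [scanl_cons]⟩

end List

section thetaMap

variable {G : Type*} [Group G] (h : G)

theorem thetaMap_scanl_mul (g : G) (t : List G) :
    thetaMap h (List.scanl (· * ·) g t) = ((g * t.prod)⁻¹ * h * g) :: t := by
  rw [thetaMap, List.zipWith_inv_mul_scanl_mul, List.headD_scanl, List.getLastD_scanl_mul]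

theorem thetaMap_map_mul_left {a : G} (ha : a * h = h * a) (l : List G) :
    thetaMap h (l.map (a * ·)) = thetaMap h l := by
  rcases eq_or_ne l [] with rfl | hl
  · rfl
  obtain ⟨g, t, rfl⟩ := List.exists_scanl_mul_eq hl
  rw [List.map_mul_left_scanl, thetaMap_scanl_mul, thetaMap_scanl_mul]
  congr 1
  calc (a * g * t.prod)⁻¹ * h * (a * g) = (g * t.prod)⁻¹ * (a⁻¹ * (h * a)) * g := by group
    _ = (g * t.prod)⁻¹ * h * g := by rw [← ha, inv_mul_cancel_left, mul_assoc]

theorem exists_map_mul_left_of_thetaMap_eq {l l' : List G} (hl : l ≠ []) (hl' : l' ≠ [])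
    (heq : thetaMap h l = thetaMap h l') : ∃ a, a * h = h * a ∧ l' = l.map (a * ·) := by
  obtain ⟨g, t, rfl⟩ := List.exists_scanl_mul_eq hl
  obtain ⟨g', t', rfl⟩ := List.exists_scanl_mul_eq hl'
  rw [thetaMap_scanl_mul, thetaMap_scanl_mul, List.cons.injEq] at heq
  obtain ⟨hhead, rfl⟩ := heq
  have hconj : g⁻¹ * h * g = g'⁻¹ * h * g' := by
    simpa [mul_assoc] using congrArg (t.prod * ·) hhead
  refine ⟨g' * g⁻¹, ?_, ?_⟩
  · calc g' * g⁻¹ * h = g' * (g⁻¹ * h * g) * g⁻¹ := by group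
      _ = h * (g' * g⁻¹) := by rw [hconj]; group
  · rw [List.map_mul_left_scanl, inv_mul_cancel_right]

theorem image_thetaMap_setOf_length (n : ℕ) :
    thetaMap h '' {l | l.length = n + 1} = {m | m.length = n + 1 ∧ IsConj h m.prod} := by
  ext m
  constructor
  · rintro ⟨l, hl, rfl⟩
    obtain ⟨g, t, rfl⟩ := List.exists_scanl_mul_eq (List.ne_nil_of_length_eq_add_one hl)
    replace hl : t.length = n := by simpa using hl
    rw [thetaMap_scanl_mul]
    refine ⟨by simpa using hl, isConj_iff.mpr ⟨(g * t.prod)⁻¹, ?_⟩⟩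
    simp only [List.prod_cons]
    group
  · rintro ⟨hm, hc⟩
    obtain ⟨k, t, rfl⟩ := List.exists_cons_of_length_eq_add_one hm
    obtain ⟨c, hc⟩ := isConj_iff.mp hc
    rw [List.prod_cons] at hc
    refine ⟨List.scanl (· * ·) (c⁻¹ * k) t, by simpa using hm, ?_⟩
    rw [thetaMap_scanl_mul]
    congr 1
    calc (c⁻¹ * k * t.prod)⁻¹ * h * (c⁻¹ * k) = (k * t.prod)⁻¹ * (c * h * c⁻¹) * k := by group
      _ = k := by rw [← hc]; group

end thetaMap

theorem Theta_eq_lmapDomain {G : Type*} [Group G] (h : G) :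
    Theta h = Finsupp.lmapDomain ℂ ℂ (thetaMap h) :=
  Finsupp.lhom_ext' fun l => LinearMap.ext_ring (by simp [Theta])

/-- `ϑ_h` induces a well-defined ℂ-linear isomorphism
`E_n(G) ⊗_{ℂZ_h} ℂ ≅ C_n(ℂG)_{[h]}`: it is invariant under the diagonal `Z_h`-action
(hence factors through coinvariants), its image on `E_n(G)` is exactly `C_n(ℂG)_{[h]}`
(surjectivity of the induced map), and its kernel on `E_n(G)` is exactly the span of the
elements `a·c − c` (injectivity of the induced map on coinvariants). -/
theorem statement16 {G : Type*} [Group G] (h : G) (n : ℕ) :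
    (∀ a : G, a * h = h * a → ∀ l : List G,
      thetaMap h (l.map (fun x => a * x)) = thetaMap h l) ∧
    Submodule.map (Theta h)
        (Submodule.span ℂ {f : List G →₀ ℂ |
          ∃ l : List G, l.length = n + 1 ∧ f = Finsupp.single l 1})
      = Submodule.span ℂ {f : List G →₀ ℂ |
          ∃ l : List G, l.length = n + 1 ∧ IsConj h l.prod ∧ f = Finsupp.single l 1} ∧
    (Submodule.span ℂ {f : List G →₀ ℂ |
        ∃ l : List G, l.length = n + 1 ∧ f = Finsupp.single l 1})
      ⊓ LinearMap.ker (Theta h)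
      = Submodule.span ℂ {f : List G →₀ ℂ |
          ∃ (a : G) (l : List G), a * h = h * a ∧ l.length = n + 1 ∧
            f = Finsupp.single (l.map (fun x => a * x)) 1 - Finsupp.single l 1} := by
  have hne : ∀ l : List G, l ∈ {l : List G | l.length = n + 1} → l ≠ [] :=
    fun _ => List.ne_nil_of_length_eq_add_one
  refine ⟨fun a ha l => thetaMap_map_mul_left h ha l, ?_, ?_⟩
  · simp only [← and_assoc]
    rw [Finsupp.span_setOf_single_eq_supported, Finsupp.span_setOf_single_eq_supported,
      Theta_eq_lmapDomain, Finsupp.lmapDomain_supported, image_thetaMap_setOf_length]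
  · rw [Finsupp.span_setOf_single_eq_supported, Theta_eq_lmapDomain,
      Finsupp.supported_inf_ker_lmapDomain]
    congr 1
    ext v
    constructor
    · rintro ⟨x, hx, y, hy, hxy, rfl⟩
      obtain ⟨a, ha, rfl⟩ := exists_map_mul_left_of_thetaMap_eq h (hne y hy) (hne x hx) hxy.symm
      exact ⟨a, y, ha, hy, rfl⟩
    · rintro ⟨a, l, ha, hl, rfl⟩
      exact ⟨_, by simpa using hl, l, hl, thetaMap_map_mul_left h ha l, rfl⟩
end

section
/- Let G be a group, h ∈ G, and ϑ_h(g_0,...,g_n) = (g_n⁻¹ h g_0, g_0⁻¹g_1, ..., g_{n-1}⁻¹g_n), extended linearly to E_n(G) → C_n(ℂG)_{[h]}. Then ϑ_h is a chain map: b ∘ ϑ_h = ϑ_h ∘ ∂, where ∂ is the simplicial boundary ∂(g_0,...,g_n) = (g_1,...,g_n) + Σ_{k=1}^n (−1)^k (g_0,...,ĝ_k,...,g_n) and b is the Hochschild boundary b(a_0,...,a_n) = Σ_{j=0}^{n−1} (−1)^j (a_0,...,a_j a_{j+1},...,a_n) + (−1)^n (a_n a_0, a_1,...,a_{n−1}).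 -/
/-- Merge the entries at positions `j` and `j+1` of a list. -/
def mergeAt {G : Type*} [Group G] (l : List G) (j : ℕ) : List G :=
  l.take j ++ (l.getD j 1 * l.getD (j + 1) 1) :: l.drop (j + 2)

/-- The cyclic last face of the Hochschild boundary. -/
def cyc {G : Type*} [Group G] (l : List G) : List G :=
  (l.getLastD 1 * l.headD 1) :: l.tail.dropLast

/-- The Hochschild boundary `b` of a basis tuple. -/
noncomputable def hb {G : Type*} [Group G] (l : List G) : List G →₀ ℂ :=
  (∑ j ∈ Finset.range (l.length - 1), ((-1 : ℂ) ^ j) • Finsupp.single (mergeAt l j) 1)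
    + ((-1 : ℂ) ^ (l.length - 1)) • Finsupp.single (cyc l) 1

section helpers
variable {G : Type*} [Group G] (h : G)

lemma getLastD_eq_getElem (l : List G) (hl : 0 < l.length) :
    l.getLastD 1 = l[l.length - 1]'(by omega) := by
  rw [List.getLastD_eq_getLast?, List.getLast?_eq_getElem?,
    List.getElem?_eq_getElem (by omega)]; rfl

lemma headD_eq_getElem (l : List G) (hl : 0 < l.length) :
    l.headD 1 = l[0]'hl := by
  rw [List.headD_eq_head?, List.head?_eq_getElem?, List.getElem?_eq_getElem hl]; rfl

lemma theta_length (l : List G) (hl : 0 < l.length) :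
    (thetaMap h l).length = l.length := by
  simp [thetaMap]; omega

lemma theta_getElem_zero (l : List G) (hp : 0 < (thetaMap h l).length) :
    (thetaMap h l)[0] = (l.getLastD 1)⁻¹ * h * l.headD 1 := rfl

lemma theta_getElem_succ (l : List G) (i : ℕ) (hi : i + 1 < l.length) :
    (thetaMap h l)[i + 1]'(by rw [theta_length h l (by omega)]; exact hi)
      = (l[i]'(by omega))⁻¹ * l[i + 1]'hi := by
  show (List.zipWith (fun a b => a⁻¹ * b) l.dropLast l.tail)[i]'(by
    simp [List.length_zipWith]; omega) = _
  rw [List.getElem_zipWith, List.getElem_dropLast, List.getElem_tail]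

lemma eraseIdx_getElem (l : List G) (j k : ℕ) (hj : j < l.length)
    (hk : k < (l.eraseIdx j).length) :
    (l.eraseIdx j)[k] = if hkj : k < j then l[k]'(by rw [List.length_eraseIdx, if_pos hj] at hk; omega)
      else l[k + 1]'(by rw [List.length_eraseIdx, if_pos hj] at hk; omega) := by
  rw [List.getElem_eraseIdx]

lemma mergeAt_length (l : List G) (j : ℕ) (hj : j + 1 < l.length) :
    (mergeAt l j).length = l.length - 1 := by
  simp [mergeAt]; omega

lemma mergeAt_getElem (l : List G) (j i : ℕ) (hj : j + 1 < l.length)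
    (hi : i < l.length - 1) :
    (mergeAt l j)[i]'(by rw [mergeAt_length l j hj]; exact hi) =
      if i < j then l[i]'(by omega)
      else if i = j then l[j]'(by omega) * l[j + 1]'hj
      else l[i + 1]'(by omega) := by
  unfold mergeAt
  rw [List.getElem_append]
  rcases lt_trichotomy i j with hij | rfl | hij
  · rw [dif_pos (by simp only [List.length_take]; omega)]
    rw [List.getElem_take, if_pos hij]
  · rw [dif_neg (by simp only [List.length_take]; omega), if_neg (lt_irrefl i), if_pos rfl]
    have h0 : i - (List.take i l).length = 0 := by simp only [List.length_take]; omega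
    simp only [h0, List.getElem_cons_zero]
    rw [List.getD_eq_getElem l 1 (by omega), List.getD_eq_getElem l 1 hj]
  · rw [dif_neg (by simp only [List.length_take]; omega), if_neg (show ¬ i < j by omega), if_neg (show ¬ i = j by omega)]
    have h1 : i - (List.take j l).length = (i - j - 1) + 1 := by
      simp [List.length_take]; omega
    simp only [h1, List.getElem_cons_succ]
    rw [List.getElem_drop]
    congr 1
    omega

lemma merge_theta (l : List G) (j : ℕ) (hj : j + 1 < l.length) :
    mergeAt (thetaMap h l) j = thetaMap h (l.eraseIdx j) := by
  have hl : 0 < l.length := by omega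
  have hθ : (thetaMap h l).length = l.length := theta_length h l hl
  have he : (l.eraseIdx j).length = l.length - 1 := by
    rw [List.length_eraseIdx, if_pos (by omega)]
  have hjl : j < l.length := by omega
  have he0 : 0 < (l.eraseIdx j).length := by omega
  apply List.ext_getElem
  · rw [mergeAt_length _ j (by omega), theta_length h (l.eraseIdx j) he0, he, hθ]
  intro i h1 h2
  have hi : i < l.length - 1 := by
    rw [mergeAt_length _ j (by omega), hθ] at h1; exact h1
  rw [mergeAt_getElem _ j i (by omega) (by omega)]
  match i with
  | 0 =>
    conv_rhs => rw [theta_getElem_zero h (l.eraseIdx j)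
      (by rw [theta_length h _ he0]; omega)]
    rw [getLastD_eq_getElem (l.eraseIdx j) he0, headD_eq_getElem (l.eraseIdx j) he0]
    rw [eraseIdx_getElem l j _ hjl (by omega), eraseIdx_getElem l j 0 hjl he0]
    rw [dif_neg (show ¬ (l.eraseIdx j).length - 1 < j by omega)]
    have e1 : l[(l.eraseIdx j).length - 1 + 1]'(by omega) = l[l.length - 1]'(by omega) := by
      congr 1
      omega
    rw [e1]
    rcases Nat.eq_zero_or_pos j with rfl | hj0
    · rw [if_neg (lt_irrefl 0), if_pos rfl, dif_neg (show ¬ (0:ℕ) < 0 by omega)]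
      rw [theta_getElem_zero h l (by rw [hθ]; omega),
        theta_getElem_succ h l 0 (by omega)]
      rw [getLastD_eq_getElem _ hl, headD_eq_getElem _ hl]
      have e2 : l[0 + 1]'(by omega) = l[1]'(by omega) := by congr 1
      rw [e2]
      group
    · rw [if_pos hj0, dif_pos hj0]
      rw [theta_getElem_zero h l (by rw [hθ]; omega)]
      rw [getLastD_eq_getElem _ hl, headD_eq_getElem _ hl]
  | (k + 1) =>
    have hke : k + 1 < (l.eraseIdx j).length := by
      rw [theta_length h (l.eraseIdx j) he0] at h2; exact h2
    rw [theta_getElem_succ h (l.eraseIdx j) k hke]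
    rw [eraseIdx_getElem l j k hjl (by omega), eraseIdx_getElem l j (k+1) hjl (by omega)]
    rcases lt_trichotomy (k + 1) j with hkj | rfl | hkj
    · rw [if_pos hkj, dif_pos (show k < j by omega), dif_pos hkj]
      rw [theta_getElem_succ h l k (by omega)]
    · rw [if_neg (lt_irrefl _), if_pos rfl, dif_pos (show k < k + 1 by omega), dif_neg (show ¬ k + 1 < k + 1 by omega)]
      rw [theta_getElem_succ h l k (by omega)]
      rw [theta_getElem_succ h l (k + 1) (by omega)]
      group
    · rw [if_neg (show ¬ k + 1 < j by omega), if_neg (show ¬ k + 1 = j by omega), dif_neg (show ¬ k < j by omega), dif_neg (show ¬ k + 1 < j by omega)]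
      rw [theta_getElem_succ h l (k + 1) (by omega)]
end helpers

section main
variable {G : Type*} [Group G] (h : G)

lemma cyc_theta (l : List G) (hl : 2 ≤ l.length) :
    cyc (thetaMap h l) = thetaMap h (l.eraseIdx (l.length - 1)) := by
  have hl0 : 0 < l.length := by omega
  have hθ : (thetaMap h l).length = l.length := theta_length h l hl0
  have he : (l.eraseIdx (l.length - 1)).length = l.length - 1 := by
    rw [List.length_eraseIdx, if_pos (by omega)]
  have he0 : 0 < (l.eraseIdx (l.length - 1)).length := by omega
  apply List.ext_getElem
  · simp only [cyc, List.length_cons, List.length_dropLast, List.length_tail,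
      theta_length h (l.eraseIdx (l.length - 1)) he0, he, hθ]
    omega
  intro i h1 h2
  have hi : i < l.length - 1 := by
    simp only [cyc, List.length_cons, List.length_dropLast, List.length_tail, hθ] at h1
    omega
  match i with
  | 0 =>
    show (thetaMap h l).getLastD 1 * (thetaMap h l).headD 1 = _
    conv_rhs => rw [theta_getElem_zero h (l.eraseIdx (l.length - 1))
      (by rw [theta_length h _ he0]; omega)]
    rw [getLastD_eq_getElem (l.eraseIdx (l.length - 1)) he0,
      headD_eq_getElem (l.eraseIdx (l.length - 1)) he0,
      eraseIdx_getElem l (l.length - 1) _ (by omega) (by omega),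
      eraseIdx_getElem l (l.length - 1) 0 (by omega) he0,
      dif_pos (show (l.eraseIdx (l.length - 1)).length - 1 < l.length - 1 by omega),
      dif_pos (show 0 < l.length - 1 by omega)]
    rw [getLastD_eq_getElem (thetaMap h l) (by omega),
      headD_eq_getElem (thetaMap h l) (by omega)]
    have e1 : (thetaMap h l)[(thetaMap h l).length - 1]'(by omega)
        = (thetaMap h l)[(l.length - 2) + 1]'(by rw [hθ]; omega) := by
      congr 1
      omega
    rw [e1, theta_getElem_succ h l (l.length - 2) (by omega),
      theta_getElem_zero h l (by omega),
      getLastD_eq_getElem l hl0, headD_eq_getElem l hl0]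
    have e2 : l[l.length - 2 + 1]'(by omega) = l[l.length - 1]'(by omega) := by
      congr 1
      omega
    have e3 : l[(l.eraseIdx (l.length - 1)).length - 1]'(by omega)
        = l[l.length - 2]'(by omega) := by
      congr 1
      omega
    rw [e2, e3]
    group
  | (k + 1) =>
    show ((thetaMap h l).tail.dropLast)[k]'(by
      simp only [List.length_dropLast, List.length_tail, hθ]; omega) = _
    rw [List.getElem_dropLast, List.getElem_tail,
      theta_getElem_succ h l k (by omega),
      theta_getElem_succ h (l.eraseIdx (l.length - 1)) k
        (by rw [theta_length h _ he0] at h2; exact h2),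
      eraseIdx_getElem l (l.length - 1) k (by omega) (by omega),
      eraseIdx_getElem l (l.length - 1) (k + 1) (by omega) (by omega),
      dif_pos (show k < l.length - 1 by omega),
      dif_pos (show k + 1 < l.length - 1 by omega)]

end main

/-- `ϑ_h` is a chain map: `b ∘ ϑ_h = ϑ_h ∘ ∂` on basis tuples. -/
theorem statement17 {G : Type*} [Group G] (h : G) (n : ℕ) :
    ∀ l : List G, l.length = n + 2 →
      hb (thetaMap h l) = Finsupp.mapDomain (thetaMap h) (dS l) := by
  intro l hlen
  have hl : 0 < l.length := by omega
  unfold hb dS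
  rw [Finsupp.mapDomain_finset_sum]
  simp only [Finsupp.mapDomain_smul, Finsupp.mapDomain_single]
  rw [theta_length h l hl, hlen]
  have hn2 : n + 2 - 1 = n + 1 := by omega
  rw [hn2]
  conv_rhs => rw [Finset.sum_range_succ]
  congr 1
  · apply Finset.sum_congr rfl
    intro j hj
    rw [Finset.mem_range] at hj
    rw [merge_theta h l j (by omega)]
  · rw [cyc_theta h l (by omega), hlen, hn2]
end

section
/- Let G be a group, h ∈ G, ι_h : C_•(ℂZ_h)_{[h]} → C_•(ℂG)_{[h]} the inclusion and π_h the retraction defined from a section s of Z_h\G with s(Z_h) = 1. Then π_h is a chain map: b ∘ π_h = π_h ∘ b, where b is the Hochschild boundary; in particular, when verifying the last (cyclic) term one must use the representation g_n g_0 g_1 ⋯ g_{n-1} = (r g_n⁻¹)⁻¹ h (r g_n⁻¹) for the conjugator of the cyclically permuted tuple. -/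
/-!
Write `m = (p_h(r g₀), p_h(r g₀ g₁), …, p_h(r g₀ ⋯ gₙ))`; then
`π_h(g) = (mₙ⁻¹ h m₀, m₀⁻¹ m₁, …, mₙ₋₁⁻¹ mₙ)`. The inner face merging `g_j, g_{j+1}` deletes
`m_j` from `m`, which merges the entries `j, j+1` of `π_h(g)`; the cyclic face, read with the
conjugator `r gₙ⁻¹`, deletes `mₙ`, which is the cyclic face of `π_h(g)`. Since
`p_h(a g) = a p_h(g)` for `a ∈ Z_h`, replacing `r` by `a r` multiplies every `m_i` on the left by
`a` and leaves `π_h(g)` unchanged; this is the independence of the conjugator, which lets the faces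
of `π_h(g)` be compared with `π_h` of the faces.
-/

theorem List.getLastD_eraseIdx {α : Type*} (m : List α) (j : ℕ) (hj : j + 2 ≤ m.length) (d : α) :
    (m.eraseIdx j).getLastD d = m.getLastD d := by
  induction j generalizing m d with
  | zero =>
    match m with
    | x :: y :: t => simp
  | succ j ih =>
    match m with
    | x :: t =>
      rw [List.eraseIdx_cons_succ, List.getLastD_cons, List.getLastD_cons]
      exact ih t (by simpa using hj) x

namespace HochschildRetraction

variable {G : Type*} [Group G]

def partialProds (r : G) (l : List G) : List G := (l.scanl (· * ·) r).tail

def consecQuots (m : List G) : List G := List.zipWith (fun a b => a⁻¹ * b) m.dropLast m.tail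

def piOf (h : G) (m : List G) : List G := ((m.getLastD 1)⁻¹ * h * m.headD 1) :: consecQuots m

lemma pih_eq_piOf (h : G) (p : G → G) (r : G) (l : List G) :
    pih h p r l = piOf h ((partialProds r l).map p) := rfl

@[simp] lemma partialProds_nil (r : G) : partialProds r [] = [] := rfl

@[simp] lemma partialProds_cons (r x : G) (l : List G) :
    partialProds r (x :: l) = (r * x) :: partialProds (r * x) l := by
  cases l <;> simp [partialProds, List.scanl_cons]

@[simp] lemma length_partialProds (r : G) (l : List G) : (partialProds r l).length = l.length := by
  simp [partialProds]

lemma partialProds_append (r : G) (l l' : List G) :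
    partialProds r (l ++ l') = partialProds r l ++ partialProds (r * l.prod) l' := by
  induction l generalizing r with
  | nil => simp
  | cons x t ih => simp [ih, mul_assoc]

lemma partialProds_mul_left (a r : G) (l : List G) :
    partialProds (a * r) l = (partialProds r l).map (a * ·) := by
  induction l generalizing r with
  | nil => rfl
  | cons x t ih => simp [mul_assoc, ih]

@[simp] lemma mergeAt_zero (x y : G) (l : List G) : mergeAt (x :: y :: l) 0 = (x * y) :: l := rfl

@[simp] lemma mergeAt_cons_succ (x : G) (l : List G) (j : ℕ) :
    mergeAt (x :: l) (j + 1) = x :: mergeAt l j := by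
  simp [mergeAt]

lemma prod_mergeAt (l : List G) (j : ℕ) (hj : j + 2 ≤ l.length) : (mergeAt l j).prod = l.prod := by
  induction j generalizing l with
  | zero =>
    match l with
    | x :: y :: t => simp [mul_assoc]
  | succ j ih =>
    match l with
    | x :: t => simp [ih t (by simpa using hj)]

lemma partialProds_mergeAt (r : G) (l : List G) (j : ℕ) (hj : j + 2 ≤ l.length) :
    partialProds r (mergeAt l j) = (partialProds r l).eraseIdx j := by
  induction j generalizing l r with
  | zero =>
    match l with
    | x :: y :: t => simp [mul_assoc]
  | succ j ih =>
    match l with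
    | x :: t => simp [ih _ t (by simpa using hj)]

@[simp] lemma consecQuots_cons_cons (x y : G) (m : List G) :
    consecQuots (x :: y :: m) = (x⁻¹ * y) :: consecQuots (y :: m) := rfl

@[simp] lemma length_consecQuots (m : List G) : (consecQuots m).length = m.length - 1 := by
  simp [consecQuots]

lemma consecQuots_append_pair (m : List G) (u v : G) :
    consecQuots (m ++ [u, v]) = consecQuots (m ++ [u]) ++ [u⁻¹ * v] := by
  induction m with
  | nil => rfl
  | cons x m ih =>
    cases m with
    | nil => rfl
    | cons y m => simpa using ih

lemma consecQuots_eraseIdx_succ (m : List G) (j : ℕ) (hj : j + 3 ≤ m.length) :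
    consecQuots (m.eraseIdx (j + 1)) = mergeAt (consecQuots m) j := by
  induction j generalizing m with
  | zero =>
    match m with
    | x :: y :: z :: t => simp [mul_assoc]
  | succ j ih =>
    match m with
    | x :: y :: t =>
      rw [List.eraseIdx_cons_succ, List.eraseIdx_cons_succ, consecQuots_cons_cons,
        ← List.eraseIdx_cons_succ, ih _ (by simpa using hj)]
      rfl

lemma consecQuots_map_mul_left (a : G) (m : List G) : consecQuots (m.map (a * ·)) = consecQuots m := by
  induction m with
  | nil => rfl
  | cons x m ih =>
    cases m with
    | nil => rfl
    | cons y m => simpa [mul_assoc] using ih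

lemma piOf_map_mul_left {h a : G} (ha : Commute a h) (m : List G) :
    piOf h (m.map (a * ·)) = piOf h m := by
  cases m with
  | nil => rfl
  | cons x t =>
    rw [piOf, piOf, consecQuots_map_mul_left, List.map_cons, List.headD_cons, List.getLastD_cons,
      List.getLastD_cons, List.getLastD_map, mul_inv_rev]
    congr 1
    calc _ = (t.getLastD x)⁻¹ * (a⁻¹ * (h * a)) * x := by group
      _ = _ := by rw [← ha.eq, inv_mul_cancel_left]; rfl

lemma piOf_eraseIdx (h : G) (m : List G) (j : ℕ) (hj : j + 2 ≤ m.length) :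
    piOf h (m.eraseIdx j) = mergeAt (piOf h m) j := by
  cases j with
  | zero =>
    match m with
    | x :: y :: t => simp [piOf, mul_assoc]
  | succ j =>
    match m with
    | x :: t =>
      rw [piOf, piOf, mergeAt_cons_succ, List.getLastD_eraseIdx _ _ hj,
        consecQuots_eraseIdx_succ _ _ (by simpa using hj)]
      rfl

lemma cyc_piOf_append_singleton (h : G) {m : List G} (hm : m ≠ []) (v : G) :
    cyc (piOf h (m ++ [v])) = piOf h m := by
  obtain ⟨m, u, rfl⟩ := List.eq_nil_or_concat' m |>.resolve_left hm
  have hhead : (m ++ [u, v]).headD 1 = (m ++ [u]).headD 1 := by cases m <;> rfl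
  have hlast : (m ++ [u, v]).getLastD 1 = v := by
    rw [← List.singleton_append, ← List.append_assoc, List.getLastD_concat]
  rw [List.append_assoc, List.singleton_append, piOf, piOf, consecQuots_append_pair, cyc]
  simp only [List.getLastD_cons, List.getLastD_concat, List.headD_cons, List.tail_cons,
    List.dropLast_concat, hhead, hlast]
  group

section Pih

variable {h : G} {p : G → G}

lemma length_pih (r : G) {l : List G} (hl : l ≠ []) : (pih h p r l).length = l.length := by
  have : l.length ≠ 0 := by simpa using hl
  simp only [pih_eq_piOf, piOf, List.length_cons, length_consecQuots, List.length_map,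
    length_partialProds]
  omega

lemma pih_mul_left (hp : ∀ a g, Commute a h → p (a * g) = a * p g) {a : G} (ha : Commute a h)
    (r : G) (l : List G) : pih h p (a * r) l = pih h p r l := by
  have hmap : ((partialProds r l).map (a * ·)).map p = ((partialProds r l).map p).map (a * ·) := by
    simp only [List.map_map]
    exact List.map_congr_left fun g _ => hp a g ha
  rw [pih_eq_piOf, pih_eq_piOf, partialProds_mul_left, hmap, piOf_map_mul_left ha]

lemma pih_eq_of_conj_eq (hp : ∀ a g, Commute a h → p (a * g) = a * p g) {r r' : G}
    (hr : r⁻¹ * h * r = r'⁻¹ * h * r') (l : List G) : pih h p r l = pih h p r' l := by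
  have hcomm : Commute (r * r'⁻¹) h := by
    calc r * r'⁻¹ * h = r * (r'⁻¹ * h * r') * r'⁻¹ := by group
      _ = h * (r * r'⁻¹) := by rw [← hr]; group
  simpa using pih_mul_left hp hcomm r' l

lemma pih_mergeAt (r : G) (l : List G) {j : ℕ} (hj : j + 2 ≤ l.length) :
    pih h p r (mergeAt l j) = mergeAt (pih h p r l) j := by
  rw [pih_eq_piOf, pih_eq_piOf, partialProds_mergeAt r l j hj, ← List.eraseIdx_map,
    piOf_eraseIdx h _ j (by simpa using hj)]

lemma cyc_cons_append_singleton (a g : G) (t : List G) : cyc (a :: (t ++ [g])) = (g * a) :: t := by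
  rw [cyc, List.getLastD_cons, ← List.cons_append, List.getLastD_concat]
  simp

lemma pih_cyc (r a g : G) (t : List G) :
    pih h p (r * g⁻¹) (cyc (a :: (t ++ [g]))) = cyc (pih h p r (a :: (t ++ [g]))) := by
  have hshift : partialProds (r * g⁻¹) ((g * a) :: t) = partialProds r (a :: t) := by
    simp [mul_assoc]
  have hne : (partialProds r (a :: t)).map p ≠ [] := by simp
  rw [cyc_cons_append_singleton, pih_eq_piOf, pih_eq_piOf, hshift, ← List.cons_append,
    partialProds_append, List.map_append]
  exact (cyc_piOf_append_singleton h hne _).symm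

end Pih

lemma hb_eq_mapDomain_of_faces (F : List G → List G) (l : List G)
    (hlen : (F l).length = l.length)
    (hmerge : ∀ j, j + 2 ≤ l.length → F (mergeAt l j) = mergeAt (F l) j)
    (hcyc : F (cyc l) = cyc (F l)) :
    hb (F l) = Finsupp.mapDomain F (hb l) := by
  simp only [hb, hlen, Finsupp.mapDomain_add, Finsupp.mapDomain_finsetSum, Finsupp.mapDomain_smul,
    Finsupp.mapDomain_single, hcyc]
  congr 1
  refine Finset.sum_congr rfl fun j hj => ?_
  rw [hmerge j (by grind)]

end HochschildRetraction

open HochschildRetraction in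
theorem statement19_general {G : Type*} [Group G] (h : G) (s : G → G)
    (hconst : ∀ g₁ g₂ : G, (g₁ * g₂⁻¹) * h = h * (g₁ * g₂⁻¹) → s g₁ = s g₂)
    (R : List G → G)
    (hR : ∀ l : List G, IsConj h l.prod → l.prod = (R l)⁻¹ * h * (R l)) :
    ∀ (n : ℕ) (l : List G), l.length = n + 2 → IsConj h l.prod →
      hb (pih h (fun g => g * (s g)⁻¹) (R l) l)
        = Finsupp.mapDomain (fun m => pih h (fun g => g * (s g)⁻¹) (R m) m) (hb l) := by
  intro n l hlen hconj
  set p : G → G := fun g => g * (s g)⁻¹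
  have hp : ∀ a g, Commute a h → p (a * g) = a * p g := fun a g ha => by
    simp only [p, hconst (a * g) g (by rwa [mul_inv_cancel_right]), mul_assoc]
  obtain ⟨a, t, g, rfl⟩ : ∃ a t g, l = a :: (t ++ [g]) := by
    match l with
    | a :: b :: t =>
      exact ⟨a, (b :: t).dropLast, (b :: t).getLast (List.cons_ne_nil b t),
        by rw [List.dropLast_append_getLast]⟩
  refine hb_eq_mapDomain_of_faces (fun m => pih h p (R m) m) _
    (length_pih _ (List.cons_ne_nil a _)) (fun j hj => ?_) ?_
  · have hprod := prod_mergeAt _ j hj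
    rw [pih_eq_of_conj_eq hp ((hR _ (hprod ▸ hconj)).symm.trans (hprod ▸ hR _ hconj)),
      pih_mergeAt _ _ hj]
  · have hRl := hR _ hconj
    set r := R (a :: (t ++ [g]))
    have hprod : (cyc (a :: (t ++ [g]))).prod = (r * g⁻¹)⁻¹ * h * (r * g⁻¹) := by
      calc (cyc (a :: (t ++ [g]))).prod = g * (a :: (t ++ [g])).prod * g⁻¹ := by
            rw [cyc_cons_append_singleton]; simp [mul_assoc]
        _ = _ := by rw [hRl]; group
    have hconj' : IsConj h (cyc (a :: (t ++ [g]))).prod :=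
      isConj_iff.mpr ⟨(r * g⁻¹)⁻¹, by rw [hprod]; group⟩
    rw [pih_eq_of_conj_eq hp ((hR _ hconj').symm.trans hprod), pih_cyc]

/-- `π_h` is a chain map, `b ∘ π_h = π_h ∘ b`, on the subcomplex of tuples
with entry-product conjugate to `h`.  Here `p_h(g) = g · s(Z_h·g)⁻¹` for a section `s` of
`Z_h\G` normalized by `s(Z_h) = 1`, and `R` chooses for each tuple a conjugator witnessing
the conjugacy of its product with `h` (by independence of the conjugator, `π_h` does not
depend on this choice; for the cyclic face one uses the conjugator `r g_n⁻¹`). -/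
theorem statement19 {G : Type*} [Group G] (h : G) (s : G → G)
    (hcoset : ∀ g : G, (g * (s g)⁻¹) * h = h * (g * (s g)⁻¹))
    (hconst : ∀ g₁ g₂ : G, (g₁ * g₂⁻¹) * h = h * (g₁ * g₂⁻¹) → s g₁ = s g₂)
    (hs1 : ∀ a : G, a * h = h * a → s a = 1)
    (R : List G → G)
    (hR : ∀ l : List G, IsConj h l.prod → l.prod = (R l)⁻¹ * h * (R l)) :
    ∀ (n : ℕ) (l : List G), l.length = n + 2 → IsConj h l.prod →
      hb (pih h (fun g => g * (s g)⁻¹) (R l) l)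
        = Finsupp.mapDomain (fun m => pih h (fun g => g * (s g)⁻¹) (R m) m) (hb l) :=
  statement19_general h s hconst R hR
end
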